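/- arXiv:1704.01269 — 11 statements merged into one kernel-verified Lean document; each statement's English description precedes it below -/
import Mathlib

section
/- Let σ and τ be the elements of PGL(2,k) given by the classes of the matrices [[1,0],[0,α²]] and [[0,1],[α,0]] respectively. Then the subgroup of PGL(2,k) generated by σ and τ is isomorphic to the dihedral group of order q−1 (in Mathlib, DihedralGroup ((q−1)/2)). -/
/-!
`σ` is the class of `diag(1, α²)`, and `β ↦ [diag(1, β)]` embeds `kˣ` into `PGL(2,k)`, so `σ`
has the order of `α²`, which is `(q - 1) / 2` because `q` is odd. The antidiagonal `τ` is an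
involution with `τ σ τ = σ⁻¹`, and no power of `σ` is antidiagonal. Any pair `s, t` in a group
with `t² = 1`, `t s t = s⁻¹` and `t ∉ ⟨s⟩` generates a dihedral group of order `2 · orderOf s`.
-/

open Matrix

/-- `PGL(2,k)`: the projective general linear group, i.e. `GL(2,k)` modulo the scalar
matrices (which form exactly the center of `GL(2,k)` for a field `k`). -/
noncomputable abbrev PGL2 (k : Type*) [Field k] :=
  GL (Fin 2) k ⧸ Subgroup.center (GL (Fin 2) k)

section Dihedral

variable {G : Type*} [Group G] {s t : G}

lemma zpow_eq_zpow_iff_intCast_eq {a b : ℤ} :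
    s ^ a = s ^ b ↔ (a : ZMod (orderOf s)) = b := by
  rw [zpow_eq_zpow_iff_modEq, ZMod.intCast_eq_intCast_iff]

/-- `s ^ i` for `i : ZMod (orderOf s)`; by `zmodPow_intCast` it does not depend on the integer
representative `ZMod.cast` picks. -/
noncomputable def zmodPow (s : G) (i : ZMod (orderOf s)) : G := s ^ (i.cast : ℤ)

lemma zmodPow_intCast (s : G) (a : ℤ) : zmodPow s a = s ^ a :=
  zpow_eq_zpow_iff_intCast_eq.2 (ZMod.intCast_zmod_cast _)

@[simp]
lemma zmodPow_zero (s : G) : zmodPow s 0 = 1 := by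
  simpa using zmodPow_intCast s 0

lemma zmodPow_injective (s : G) : Function.Injective (zmodPow s) := by
  intro i j h
  rwa [zmodPow, zmodPow, zpow_eq_zpow_iff_intCast_eq, ZMod.intCast_zmod_cast,
    ZMod.intCast_zmod_cast] at h

lemma zpow_mul_of_mul_mul_eq_inv (ht : t * t = 1) (hts : t * s * t = s⁻¹) (a : ℤ) :
    s ^ a * t = t * s ^ (-a) := by
  have ht' : t⁻¹ = t := inv_eq_of_mul_eq_one_right ht
  have : t * s ^ a * t⁻¹ = s ^ (-a) := by
    rw [← conj_zpow, ht', hts, _root_.inv_zpow']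
  calc s ^ a * t = t * (t * s ^ a * t) := by rw [← mul_assoc, ← mul_assoc, ht, one_mul]
    _ = t * s ^ (-a) := by rw [← this, ht']

noncomputable def dihedralGroupHom (ht : t * t = 1) (hts : t * s * t = s⁻¹) :
    DihedralGroup (orderOf s) →* G where
  toFun
    | .r i => zmodPow s i
    | .sr i => t * zmodPow s i
  map_one' := zmodPow_zero s
  map_mul' := by
    have hcomm := zpow_mul_of_mul_mul_eq_inv ht hts
    rintro (i | i) (j | j) <;>
    obtain ⟨a, rfl⟩ := ZMod.intCast_surjective i <;>
    obtain ⟨b, rfl⟩ := ZMod.intCast_surjective j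
    · show zmodPow s _ = zmodPow s _ * zmodPow s _
      simp only [← Int.cast_add, zmodPow_intCast, _root_.zpow_add]
    · show t * zmodPow s _ = zmodPow s _ * (t * zmodPow s _)
      simp only [← Int.cast_sub, zmodPow_intCast]
      rw [← mul_assoc, hcomm, mul_assoc, ← _root_.zpow_add, neg_add_eq_sub]
    · show t * zmodPow s _ = t * zmodPow s _ * zmodPow s _
      simp only [← Int.cast_add, zmodPow_intCast, _root_.zpow_add, mul_assoc]
    · show zmodPow s _ = t * zmodPow s _ * (t * zmodPow s _)
      simp only [← Int.cast_sub, zmodPow_intCast]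
      rw [mul_assoc, ← mul_assoc _ t, hcomm, ← mul_assoc, ← mul_assoc, ht, one_mul,
        ← _root_.zpow_add, neg_add_eq_sub]

@[simp]
lemma dihedralGroupHom_r (ht : t * t = 1) (hts : t * s * t = s⁻¹) (i : ZMod (orderOf s)) :
    dihedralGroupHom ht hts (.r i) = zmodPow s i := rfl

@[simp]
lemma dihedralGroupHom_sr (ht : t * t = 1) (hts : t * s * t = s⁻¹) (i : ZMod (orderOf s)) :
    dihedralGroupHom ht hts (.sr i) = t * zmodPow s i := rfl

lemma dihedralGroupHom_injective (ht : t * t = 1) (hts : t * s * t = s⁻¹)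
    (ht_notMem : t ∉ Subgroup.zpowers s) : Function.Injective (dihedralGroupHom ht hts) := by
  refine (injective_iff_map_eq_one _).2 ?_
  rintro (i | i) h
  · exact congrArg DihedralGroup.r (zmodPow_injective s (h.trans (zmodPow_zero s).symm))
  · obtain ⟨a, rfl⟩ := ZMod.intCast_surjective i
    have h : t * s ^ a = 1 := (zmodPow_intCast s a) ▸ h
    exact absurd (eq_inv_of_mul_eq_one_left h ▸ inv_mem (Subgroup.zpow_mem_zpowers s a)) ht_notMem

lemma range_dihedralGroupHom (ht : t * t = 1) (hts : t * s * t = s⁻¹) :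
    (dihedralGroupHom ht hts).range = Subgroup.closure {s, t} := by
  have hs : s ∈ Subgroup.closure {s, t} := Subgroup.subset_closure (by simp)
  have ht : t ∈ Subgroup.closure {s, t} := Subgroup.subset_closure (by simp)
  refine le_antisymm ?_ ((Subgroup.closure_le _).2 ?_)
  · rintro _ ⟨i | i, rfl⟩
    · exact zpow_mem hs _
    · exact mul_mem ht (zpow_mem hs _)
  · rintro x (rfl | rfl)
    · exact ⟨.r 1, by simpa using zmodPow_intCast x 1⟩
    · exact ⟨.sr 0, by simp⟩

theorem nonempty_mulEquiv_dihedralGroup_of_mul_mul_eq_inv (ht : t * t = 1)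
    (hts : t * s * t = s⁻¹) (ht_notMem : t ∉ Subgroup.zpowers s) :
    Nonempty (Subgroup.closure {s, t} ≃* DihedralGroup (orderOf s)) :=
  ⟨(MulEquiv.subgroupCongr (range_dihedralGroupHom ht hts)).symm.trans
    (MonoidHom.ofInjective (dihedralGroupHom_injective ht hts ht_notMem)).symm⟩

end Dihedral

lemma Matrix.GeneralLinearGroup.mk_center_ne_one_of_apply_ne_zero {n R : Type*} [Fintype n]
    [DecidableEq n] [CommRing R] {g : GL n R} {i j : n} (hij : i ≠ j)
    (hg : (g : Matrix n n R) i j ≠ 0) :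
    (g : GL n R ⧸ Subgroup.center (GL n R)) ≠ 1 := by
  rw [Ne, QuotientGroup.eq_one_iff, GeneralLinearGroup.mem_center_iff_val_mem_range_scalar]
  rintro ⟨c, hc⟩
  exact hg (by simp [← hc, hij])

section PGL2

variable {K : Type*} [Field K]

noncomputable def diagOneGL : Kˣ →* GL (Fin 2) K where
  toFun β := GeneralLinearGroup.mkOfDetNeZero !![1, 0; 0, (β : K)] (by simp [det_fin_two_of])
  map_one' := Units.ext <| by simp [one_fin_two]
  map_mul' β γ := Units.ext <| by simp

noncomputable def antidiagGL (a : Kˣ) : GL (Fin 2) K :=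
  GeneralLinearGroup.mkOfDetNeZero !![0, 1; (a : K), 0] (by simp [det_fin_two_of])

lemma mk_diagOneGL_injective :
    Function.Injective fun β : Kˣ ↦ (diagOneGL β : PGL2 K) := by
  refine (injective_iff_map_eq_one ((QuotientGroup.mk' _).comp diagOneGL)).2 fun β hβ ↦ ?_
  obtain ⟨c, hc⟩ := GeneralLinearGroup.mem_center_iff_val_mem_range_scalar.1
    ((QuotientGroup.eq_one_iff _).1 hβ)
  have h00 := congrFun₂ hc 0 0
  have h11 := congrFun₂ hc 1 1
  simp only [scalar_apply, diagonal_apply_eq, diagOneGL, MonoidHom.coe_mk, OneHom.coe_mk,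
    GeneralLinearGroup.val_mkOfDetNeZero, of_apply, cons_val', cons_val_zero, cons_val_fin_one,
    cons_val_one] at h00 h11
  exact Units.ext (h11.symm.trans h00)

lemma orderOf_mk_diagOneGL (β : Kˣ) : orderOf (diagOneGL β : PGL2 K) = orderOf β :=
  orderOf_injective ((QuotientGroup.mk' _).comp diagOneGL) mk_diagOneGL_injective β

lemma mk_notMem_zpowers_mk_diagOneGL {g : GL (Fin 2) K}
    (hg : (g : Matrix (Fin 2) (Fin 2) K) 0 1 ≠ 0) (β : Kˣ) :
    (g : PGL2 K) ∉ Subgroup.zpowers (diagOneGL β : PGL2 K) := by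
  rintro ⟨a, ha : _ ^ a = _⟩
  rw [← QuotientGroup.mk_zpow, ← map_zpow, QuotientGroup.eq, ← map_inv] at ha
  refine GeneralLinearGroup.mk_center_ne_one_of_apply_ne_zero zero_ne_one ?_
    ((QuotientGroup.eq_one_iff _).2 ha)
  simpa [diagOneGL, Matrix.mul_apply, Fin.sum_univ_two] using hg

lemma mk_antidiagGL_mul_self (a : Kˣ) : (antidiagGL a * antidiagGL a : PGL2 K) = 1 := by
  rw [← QuotientGroup.mk_mul, QuotientGroup.eq_one_iff,
    GeneralLinearGroup.mem_center_iff_val_mem_range_scalar]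
  exact ⟨a, by ext i j; fin_cases i <;> fin_cases j <;> simp [antidiagGL]⟩

lemma mk_antidiagGL_mul_mk_diagOneGL_mul_mk_antidiagGL (a β : Kˣ) :
    (antidiagGL a * diagOneGL β * antidiagGL a : PGL2 K) = (diagOneGL β : PGL2 K)⁻¹ := by
  refine eq_inv_of_mul_eq_one_left ?_
  rw [← QuotientGroup.mk_mul, ← QuotientGroup.mk_mul, ← QuotientGroup.mk_mul,
    QuotientGroup.eq_one_iff, GeneralLinearGroup.mem_center_iff_val_mem_range_scalar]
  refine ⟨a * β, ?_⟩
  ext i j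
  fin_cases i <;> fin_cases j <;> simp [antidiagGL, diagOneGL, mul_comm]

end PGL2

/-- The subgroup of `PGL(2,k)` generated by the classes of the matrices
`[[1,0],[0,α²]]` and `[[0,1],[α,0]]` is isomorphic to the dihedral group of order `q - 1`. -/
theorem stmt_0 (p e q : ℕ) (hp : p.Prime) (hp2 : p ≠ 2) (hq : q = p ^ e)
    (k : Type*) [Field k]
    (α : kˣ) (hord : orderOf α = q - 1)
    (σ τ : PGL2 k)
    (hσ : σ = QuotientGroup.mk (Matrix.GeneralLinearGroup.mkOfDetNeZero
      !![(1 : k), 0; 0, (α : k) ^ 2] (by simp [Matrix.det_fin_two_of])))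
    (hτ : τ = QuotientGroup.mk (Matrix.GeneralLinearGroup.mkOfDetNeZero
      !![(0 : k), 1; (α : k), 0] (by simp [Matrix.det_fin_two_of]))) :
    Nonempty (↥(Subgroup.closure {σ, τ}) ≃* DihedralGroup ((q - 1) / 2)) := by
  replace hσ : σ = diagOneGL (α ^ 2) := hσ.trans (congrArg _ (Units.ext (by simp [diagOneGL])))
  replace hτ : τ = antidiagGL α := hτ
  have h2 : 2 ∣ orderOf α := by
    rw [hord, hq]
    exact (Nat.Odd.sub_odd (hp.odd_of_ne_two hp2).pow odd_one).two_dvd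
  have hσord : orderOf σ = (q - 1) / 2 := by
    rw [hσ, orderOf_mk_diagOneGL, orderOf_pow_of_dvd two_ne_zero h2, hord]
  subst hσ hτ
  rw [← hσord]
  exact nonempty_mulEquiv_dihedralGroup_of_mul_mul_eq_inv (mk_antidiagGL_mul_self α)
    (mk_antidiagGL_mul_mk_diagOneGL_mul_mk_antidiagGL α _)
    (mk_notMem_zpowers_mk_diagOneGL one_ne_zero _)
end

section
/- The rational function f = X^{(q−1)/2} − X^{−(q−1)/2} ∈ k(X) is invariant under the substitutions corresponding to σ and τ: the k-algebra automorphism of k(X) sending X to α²·X fixes f, and the k-algebra automorphism of k(X) sending X to α·X⁻¹ fixes f. -/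
/-! With `m = (q - 1) / 2`, so `α` has order `2m`: the first substitution multiplies `X^m` by
`α^(2m) = 1`, and the second sends `X^m` to `α^m X^(-m) = -X^(-m)`, because `α^m` has order 2;
either way `X^m - X^(-m)` is unchanged. -/

theorem IsPrimitiveRoot.pow_eq_neg_one_of_two_mul {R : Type*} [CommRing R] [NoZeroDivisors R]
    {ζ : R} {m : ℕ} (h : IsPrimitiveRoot ζ (2 * m)) (hm : m ≠ 0) : ζ ^ m = -1 := by
  have h2 := h.pow_of_dvd hm (dvd_mul_left m 2)
  rw [Nat.mul_div_cancel _ (Nat.pos_of_ne_zero hm)] at h2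
  exact h2.eq_neg_one_of_two_right

section PowSubInvPow

variable {L F : Type*} [Field L] [FunLike F L L] [RingHomClass F L L] (φ : F) {x c : L} (m : ℕ)

theorem map_pow_sub_inv_pow_eq_self_of_map_eq_mul (hc : c ^ m = 1) (hφ : φ x = c * x) :
    φ (x ^ m - (x ^ m)⁻¹) = x ^ m - (x ^ m)⁻¹ := by
  rw [map_sub, map_inv₀, map_pow, hφ, mul_pow, hc, one_mul]

theorem map_pow_sub_inv_pow_eq_self_of_map_eq_mul_inv (hc : c ^ m = -1) (hφ : φ x = c * x⁻¹) :
    φ (x ^ m - (x ^ m)⁻¹) = x ^ m - (x ^ m)⁻¹ := by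
  rw [map_sub, map_inv₀, map_pow, hφ, mul_pow, hc, neg_one_mul, inv_neg, inv_pow, inv_inv]
  ring

end PowSubInvPow

theorem stmt_1_general (p e q : ℕ) (hp : p.Prime) (hp2 : p ≠ 2) (hq : q = p ^ e) (hq5 : 5 ≤ q)
    (k : Type*) [Field k]
    (α : kˣ) (hord : orderOf α = q - 1)
    (f : RatFunc k)
    (hf : f = RatFunc.X ^ ((q - 1) / 2) - (RatFunc.X ^ ((q - 1) / 2))⁻¹) :
    (∀ φ : RatFunc k ≃ₐ[k] RatFunc k,
        φ RatFunc.X = RatFunc.C ((α : k) ^ 2) * RatFunc.X → φ f = f) ∧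
    (∀ φ : RatFunc k ≃ₐ[k] RatFunc k,
        φ RatFunc.X = RatFunc.C (α : k) * RatFunc.X⁻¹ → φ f = f) := by
  obtain ⟨m, hm⟩ : Even (q - 1) :=
    Nat.Odd.sub_odd (hq ▸ (hp.odd_of_ne_two hp2).pow) odd_one
  have hprim : IsPrimitiveRoot (α : k) (2 * m) := IsPrimitiveRoot.coe_units_iff.mpr <| by
    rw [two_mul, ← hm, ← hord]
    exact IsPrimitiveRoot.orderOf α
  rw [show (q - 1) / 2 = m by omega] at hf
  subst hf
  refine ⟨fun φ hφ => map_pow_sub_inv_pow_eq_self_of_map_eq_mul φ m ?_ hφ,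
    fun φ hφ => map_pow_sub_inv_pow_eq_self_of_map_eq_mul_inv φ m ?_ hφ⟩
  · rw [← map_pow, ← pow_mul, hprim.pow_eq_one, map_one]
  · rw [← map_pow, hprim.pow_eq_neg_one_of_two_mul (by omega), map_neg, map_one]

/-- The rational function `f = X^((q-1)/2) - X^(-(q-1)/2) ∈ k(X)` is fixed by the
`k`-algebra automorphism of `k(X)` sending `X` to `α² * X`, and by the one sending
`X` to `α * X⁻¹`. -/
theorem stmt_1 (p e q : ℕ) (hp : p.Prime) (hp2 : p ≠ 2) (hq : q = p ^ e) (hq5 : 5 ≤ q)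
    (k : Type*) [Field k] [IsAlgClosed k] [CharP k p]
    (α : kˣ) (hαq : (α : k) ^ q = (α : k)) (hord : orderOf α = q - 1)
    (f : RatFunc k)
    (hf : f = RatFunc.X ^ ((q - 1) / 2) - (RatFunc.X ^ ((q - 1) / 2))⁻¹) :
    (∀ φ : RatFunc k ≃ₐ[k] RatFunc k,
        φ RatFunc.X = RatFunc.C ((α : k) ^ 2) * RatFunc.X → φ f = f) ∧
    (∀ φ : RatFunc k ≃ₐ[k] RatFunc k,
        φ RatFunc.X = RatFunc.C (α : k) * RatFunc.X⁻¹ → φ f = f) :=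
  stmt_1_general p e q hp hp2 hq hq5 k α hord f hf
end

section
/- The rational function g = (X−1)/(X^q − X) ∈ k(X) is invariant under the substitution corresponding to η: the k-algebra automorphism of k(X) sending X to (X + α − 1)/α fixes g, i.e., g((X+α−1)/α) = g(X) in k(X). -/
open RatFunc

/-! Since `a ^ q = a`, also `(a - 1) ^ q = a - 1`, so `η(X) = (X + a - 1) / a` satisfies
`η(X) ^ q - η(X) = (X ^ q - X) / a` by additivity of Frobenius, while `η(X) - 1 = (X - 1) / a`.
The common factor `1 / a` cancels in `g`. -/

section AffineSubstitution

variable {L : Type*} [Field L] (p e : ℕ) [ExpChar L p] {a c : L}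

theorem frobenius_sub_self_affine (x : L) (ha : a ^ p ^ e = a) (hc : c ^ p ^ e = c) :
    ((x + c) / a) ^ p ^ e - (x + c) / a = (x ^ p ^ e - x) / a := by
  rw [div_pow, add_pow_expChar_pow, ha, hc, div_sub_div_same]
  ring

theorem div_frobenius_sub_self_invariant (x : L) (ha0 : a ≠ 0) (ha : a ^ p ^ e = a) :
    ((x + a - 1) / a - 1) / (((x + a - 1) / a) ^ p ^ e - (x + a - 1) / a) =
      (x - 1) / (x ^ p ^ e - x) := by
  have hc : (a - 1) ^ p ^ e = a - 1 := by rw [sub_pow_expChar_pow, one_pow, ha]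
  have hnum : (x + a - 1) / a - 1 = (x - 1) / a := by
    field_simp
    ring
  rw [hnum, add_sub_assoc, frobenius_sub_self_affine p e x ha hc]
  exact div_div_div_cancel_right₀ ha0 _ _

end AffineSubstitution

theorem stmt_3_general (p e q : ℕ) (hp : p.Prime) (hq : q = p ^ e)
    (k : Type*) [Field k] [CharP k p]
    (α : kˣ) (hαq : (α : k) ^ q = (α : k))
    (g : RatFunc k)
    (hg : g = (RatFunc.X - 1) / (RatFunc.X ^ q - RatFunc.X)) :
    ∀ φ : RatFunc k ≃ₐ[k] RatFunc k,
      φ RatFunc.X = (RatFunc.X + RatFunc.C (α : k) - 1) / RatFunc.C (α : k) → φ g = g := by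
  intro φ hφ
  subst hq hg
  have : ExpChar (RatFunc k) p := .prime hp
  have hα0 : RatFunc.C (α : k) ≠ 0 := (map_ne_zero RatFunc.C).mpr α.ne_zero
  have hαq' : RatFunc.C (α : k) ^ p ^ e = RatFunc.C (α : k) := by rw [← map_pow, hαq]
  simp only [map_div₀, map_sub, map_pow, map_one, hφ]
  exact div_frobenius_sub_self_invariant p e _ hα0 hαq'

/-- The rational function `g = (X-1)/(X^q - X) ∈ k(X)` is fixed by the `k`-algebra
automorphism of `k(X)` sending `X` to `(X + α - 1)/α`. -/
theorem stmt_3 (p e q : ℕ) (hp : p.Prime) (hp2 : p ≠ 2) (hq : q = p ^ e) (hq5 : 5 ≤ q)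
    (k : Type*) [Field k] [IsAlgClosed k] [CharP k p]
    (α : kˣ) (hαq : (α : k) ^ q = (α : k)) (hord : orderOf α = q - 1)
    (g : RatFunc k)
    (hg : g = (RatFunc.X - 1) / (RatFunc.X ^ q - RatFunc.X)) :
    ∀ φ : RatFunc k ≃ₐ[k] RatFunc k,
      φ RatFunc.X = (RatFunc.X + RatFunc.C (α : k) - 1) / RatFunc.C (α : k) → φ g = g :=
  stmt_3_general p e q hp hq k α hαq g hg
end

section
/- Let g = (X−1)/(X^q − X) ∈ k(X). Then the field extension k(X) over the intermediate field k(g) generated by g over k is a Galois extension, and its Galois group is isomorphic to the cyclic group Z/(q−1)Z. (This is the field-theoretic content of the statement that P₂ = (1:0:0) is an inner Galois point for the curve C₁ parametrized by (s:t) ↦ (s^{(q+1)/2}t^{(q−1)/2} : (s−t)t^{q−1} : s^q − st^{q−1}), with cyclic Galois group of order q−1.) -/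
/-! In characteristic `p`, `X ^ q - X = y ^ q - y` for `y = X - 1`, so `g = (y ^ (q - 1) - 1)⁻¹`
and `k(g) = k(y ^ (q - 1))`. Hence `k(X) = k(g)(y)` is generated by a `(q - 1)`-th root of an
element of `k(g)`, and has degree `q - 1` over it, the degree of the polynomial `y ^ (q - 1)`.
As `q - 1` is prime to `p`, `k` contains a primitive `(q - 1)`-th root of unity, so this is a
Kummer extension: Galois with cyclic group `ℤ/(q - 1)`. -/

open RatFunc IntermediateField

theorem div_pow_succ_sub_self {K : Type*} [Field K] {y : K} (hy : y ≠ 0) (n : ℕ) :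
    y / (y ^ (n + 1) - y) = (y ^ n - 1)⁻¹ := by
  rw [pow_succ', ← mul_sub_one, div_mul_cancel_left₀ hy]

namespace IntermediateField

variable {F E : Type*} [Field F] [Field E] [Algebra F E]

theorem adjoin_simple_sub_algebraMap (x : E) (c : F) : F⟮x - algebraMap F E c⟯ = F⟮x⟯ := by
  apply le_antisymm <;> rw [adjoin_simple_le_iff]
  · exact sub_mem (mem_adjoin_simple_self F x) (algebraMap_mem _ c)
  · simpa using add_mem (mem_adjoin_simple_self F (x - algebraMap F E c)) (algebraMap_mem _ c)

theorem adjoin_simple_inv (x : E) : F⟮x⁻¹⟯ = F⟮x⟯ := by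
  apply le_antisymm <;> rw [adjoin_simple_le_iff]
  · exact inv_mem (mem_adjoin_simple_self F x)
  · simpa using inv_mem (mem_adjoin_simple_self F x⁻¹)

end IntermediateField

open Module Polynomial in
theorem isGalois_and_nonempty_autEquivZmod_of_pow_eq {K L : Type*} [Field K] [Field L]
    [Algebra K L] {n : ℕ} [NeZero n] (hn : finrank K L = n) {ζ : K} (hζ : IsPrimitiveRoot ζ n)
    {α : L} {a : K} (ha : α ^ n = algebraMap K L a) (hα : K⟮α⟯ = ⊤) :
    IsGalois K L ∧ Nonempty ((L ≃ₐ[K] L) ≃* Multiplicative (ZMod n)) := by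
  subst hn
  have : FiniteDimensional K L := Module.finite_of_finrank_pos (NeZero.pos _)
  have hroot : ζ ∈ primitiveRoots (finrank K L) K := (mem_primitiveRoots (NeZero.pos _)).mpr hζ
  have H := irreducible_X_pow_sub_C_of_root_adjoin_eq_top ha hα
  have := isSplittingField_X_pow_sub_C_of_root_adjoin_eq_top ⟨ζ, hroot⟩ ha hα
  exact ⟨isGalois_of_isSplittingField_X_pow_sub_C ⟨ζ, hroot⟩ H L,
    ⟨autEquivZmod H L hζ⟩⟩

namespace RatFunc

variable {K : Type*} [Field K]

theorem finrank_adjoin_algebraMap (p : Polynomial K) :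
    Module.finrank K⟮algebraMap (Polynomial K) (RatFunc K) p⟯ (RatFunc K) = p.natDegree := by
  simp [finrank_eq_max_natDegree, num_algebraMap, denom_algebraMap]

theorem adjoin_X_sub_C (E : IntermediateField K (RatFunc K)) (c : K) :
    E⟮X - C c⟯ = ⊤ := by
  rw [← RatFunc.IntermediateField.adjoin_X E]
  exact adjoin_simple_sub_algebraMap (F := E) X (algebraMap K E c)

theorem finrank_adjoin_X_sub_C_pow (n : ℕ) (c : K) :
    Module.finrank K⟮(X - C c) ^ n⟯ (RatFunc K) = n := by
  have hpoly : (X - C c : RatFunc K) ^ n =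
      algebraMap (Polynomial K) (RatFunc K) ((Polynomial.X - Polynomial.C c) ^ n) := by
    simp [algebraMap_X, algebraMap_C]
  rw [hpoly, finrank_adjoin_algebraMap, Polynomial.natDegree_pow, Polynomial.natDegree_X_sub_C,
    mul_one]

theorem isGalois_adjoin_X_sub_C_pow {n : ℕ} [NeZero n] {ζ : K} (hζ : IsPrimitiveRoot ζ n)
    (c : K) :
    IsGalois K⟮(X - C c) ^ n⟯ (RatFunc K) ∧
      Nonempty ((RatFunc K ≃ₐ[K⟮(X - C c) ^ n⟯] RatFunc K) ≃* Multiplicative (ZMod n)) :=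
  isGalois_and_nonempty_autEquivZmod_of_pow_eq (finrank_adjoin_X_sub_C_pow n c)
    (hζ.map_of_injective (algebraMap K _).injective) (a := ⟨_, mem_adjoin_simple_self K _⟩) rfl
    (adjoin_X_sub_C _ c)

end RatFunc

theorem stmt_5_general (p e q : ℕ) (hp : p.Prime) (hq : q = p ^ e) (hq5 : 5 ≤ q)
    (k : Type*) [Field k] [IsAlgClosed k] [CharP k p]
    (g : RatFunc k)
    (hg : g = (RatFunc.X - 1) / (RatFunc.X ^ q - RatFunc.X)) :
    IsGalois (IntermediateField.adjoin k {g}) (RatFunc k) ∧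
      Nonempty ((RatFunc k ≃ₐ[IntermediateField.adjoin k {g}] RatFunc k) ≃*
        Multiplicative (ZMod (q - 1))) := by
  have := Fact.mk hp
  have hq_succ : q - 1 + 1 = q := by omega
  have hq0 : (q : k) = 0 := by
    rw [CharP.cast_eq_zero_iff k p, hq]
    exact dvd_pow_self p (by rintro rfl; rw [pow_zero] at hq; omega)
  have : NeZero ((q - 1 : ℕ) : k) := ⟨by rw [Nat.cast_pred (by omega), hq0]; simp⟩
  have : NeZero (q - 1) := ⟨by omega⟩
  obtain ⟨ζ, hζ⟩ := HasEnoughRootsOfUnity.exists_primitiveRoot k (q - 1)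
  have hfrob : (X : RatFunc k) ^ q - X = (X - 1) ^ (q - 1 + 1) - (X - 1) := by
    rw [hq_succ, hq, sub_pow_expChar_pow, one_pow]; ring
  have hX1 : (X - 1 : RatFunc k) ≠ 0 := by
    rw [← map_one C, ← algebraMap_X, ← algebraMap_C, ← map_sub]
    exact (algebraMap_ne_zero (Polynomial.X_sub_C_ne_zero 1))
  have hadjoin : k⟮g⟯ = k⟮(X - 1) ^ (q - 1)⟯ := by
    rw [hg, hfrob, div_pow_succ_sub_self hX1, adjoin_simple_inv]
    simpa using adjoin_simple_sub_algebraMap ((X - 1) ^ (q - 1) : RatFunc k) (1 : k)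
  rw [hadjoin]
  have h := isGalois_adjoin_X_sub_C_pow hζ (1 : k)
  rwa [map_one] at h

/-- For `g = (X-1)/(X^q - X) ∈ k(X)`, the extension `k(X)/k(g)` is Galois with
Galois group isomorphic to the cyclic group `ℤ/(q-1)ℤ`. -/
theorem stmt_5 (p e q : ℕ) (hp : p.Prime) (hp2 : p ≠ 2) (hq : q = p ^ e) (hq5 : 5 ≤ q)
    (k : Type*) [Field k] [IsAlgClosed k] [CharP k p]
    (g : RatFunc k)
    (hg : g = (RatFunc.X - 1) / (RatFunc.X ^ q - RatFunc.X)) :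
    IsGalois (IntermediateField.adjoin k {g}) (RatFunc k) ∧
      Nonempty ((RatFunc k ≃ₐ[IntermediateField.adjoin k {g}] RatFunc k) ≃*
        Multiplicative (ZMod (q - 1))) :=
  stmt_5_general p e q hp hq hq5 k g hg
end

section
/- The intermediate field of k(X)/k generated by the two rational functions f₁ = X^{(q+1)/2}/(X^q − X) and f₂ = (X−1)/(X^q − X) is all of k(X), i.e., IntermediateField.adjoin k {f₁, f₂} = ⊤. (This expresses that the parametrization φ₁: (s:t) ↦ (s^{(q+1)/2}t^{(q−1)/2} : (s−t)t^{q−1} : s^q − st^{q−1}) of the curve C₁ is birational onto its image.) -/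
/-!
Put `Y = X - 1` and `F = k(f₁, f₂)`. Frobenius gives `X^q - X = Y^q - Y`, so `1 + f₂⁻¹ = Y^(q-1)`
and `f₁ / f₂ = X^((q+1)/2) / Y` lie in `F`, and `t = Y⁻¹` is a root of the quadratic
`t² + (1 + Y^(q-1)) t + (Y^(q-1) - (f₁/f₂)²)` over `F`. Applying the `q`-power Frobenius and
rewriting `t^q = Y^(1-q) t` gives a second quadratic relation over `F`; eliminating `t²` between
the two leaves a linear equation for `t` whose coefficient vanishes only if `Y^(q²-1) = 1`,
impossible as `Y` is transcendental. Hence `t ∈ F`, so `X ∈ F`.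
-/

open RatFunc

theorem Subfield.mem_of_sq_add_mul_add_eq_zero_of_pow_eq_mul {L : Type*} [Field L] (p n : ℕ)
    [ExpChar L p] (F : Subfield L) {s t b c : L} (hs : s ∈ F) (hb : b ∈ F) (hc : c ∈ F)
    (hs₀ : s ≠ 0) (hne : s * b ≠ b ^ p ^ n) (hpow : t ^ p ^ n = s * t)
    (hquad : t ^ 2 + b * t + c = 0) : t ∈ F := by
  have hfrob := congrArg (iterateFrobenius L p n) hquad
  simp only [map_add, map_mul, map_pow, map_zero, iterateFrobenius_def, hpow] at hfrob
  have hcoeff : s * (s * b - b ^ p ^ n) ≠ 0 := mul_ne_zero hs₀ (sub_ne_zero.2 hne)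
  have ht : t = (c ^ p ^ n - s ^ 2 * c) / (s * (s * b - b ^ p ^ n)) := by
    rw [eq_div_iff hcoeff]
    linear_combination s ^ 2 * hquad - hfrob
  rw [ht]
  exact div_mem (sub_mem (pow_mem hc _) (mul_mem (pow_mem hs 2) hc))
    (mul_mem hs (sub_mem (mul_mem hs hb) (pow_mem hb _)))

theorem inv_mul_one_add_ne_one_add_pow {L : Type*} [Field L] (p n : ℕ) [ExpChar L p] {h : L}
    (h₀ : h ≠ 0) (hroot : h ^ (p ^ n + 1) ≠ 1) : h⁻¹ * (1 + h) ≠ (1 + h) ^ p ^ n := by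
  rw [add_pow_expChar_pow, one_pow]
  intro heq
  have := congrArg (h * ·) heq
  simp only [← mul_assoc, mul_inv_cancel₀ h₀, one_mul] at this
  exact hroot (by linear_combination -this)

namespace RatFunc

variable {K : Type*} [Field K]

theorem transcendental_X_sub_one : Transcendental K (X - 1 : RatFunc K) := by
  convert (transcendental_X (K := K)).aeval (Polynomial.X - Polynomial.C 1)
    (by rw [Polynomial.natDegree_X_sub_C]; exact one_ne_zero)
    (by rw [(Polynomial.monic_X_sub_C 1).leadingCoeff]; exact one_mem _)
  simp

theorem X_sub_one_ne_zero : (X - 1 : RatFunc K) ≠ 0 := fun h ↦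
  transcendental_X_sub_one (h ▸ isAlgebraic_zero)

theorem X_sub_one_pow_ne_one {n : ℕ} (hn : n ≠ 0) : (X - 1 : RatFunc K) ^ n ≠ 1 := fun h ↦
  transcendental_X_sub_one (IsAlgebraic.of_pow (Nat.pos_of_ne_zero hn) (h ▸ isAlgebraic_one))

theorem X_pow_sub_X_ne_zero {n : ℕ} (hn : 1 < n) : (X ^ n - X : RatFunc K) ≠ 0 := fun h ↦
  transcendental_X ⟨_, FiniteField.X_pow_card_sub_X_ne_zero K hn, by simpa using h⟩

variable (p n : ℕ) [ExpChar K p]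

theorem X_sub_one_pow_pred :
    (X - 1 : RatFunc K) ^ (p ^ n - 1) = 1 + ((X - 1) / (X ^ p ^ n - X))⁻¹ := by
  set Y : RatFunc K := X - 1
  have hY : Y ≠ 0 := X_sub_one_ne_zero
  have hX : X = Y + 1 := (sub_add_cancel _ _).symm
  have hq : Y ^ p ^ n = Y ^ (p ^ n - 1) * Y := by
    rw [← pow_succ, Nat.sub_add_cancel (expChar_pow_pos K p n)]
  rw [inv_div, hX, add_pow_expChar_pow, one_pow, hq]
  field_simp
  ring

theorem inv_X_sub_one_sq_add {m : ℕ} (hm : 2 * m = p ^ n + 1) :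
    (X - 1 : RatFunc K)⁻¹ ^ 2 + (1 + (X - 1) ^ (p ^ n - 1)) * (X - 1)⁻¹
      + ((X - 1) ^ (p ^ n - 1) - (X ^ m / (X - 1)) ^ 2) = 0 := by
  set Y : RatFunc K := X - 1
  have hY : Y ≠ 0 := X_sub_one_ne_zero
  have hXm : (X ^ m : RatFunc K) ^ 2 = (Y ^ (p ^ n - 1) * Y + 1) * (Y + 1) := by
    rw [← pow_mul, mul_comm, hm, pow_succ, ← sub_add_cancel X 1, add_pow_expChar_pow, one_pow,
      ← pow_succ, Nat.sub_add_cancel (expChar_pow_pos K p n)]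
  field_simp
  rw [hXm]
  ring

end RatFunc

theorem stmt_6_general (p e q : ℕ) (hp : p.Prime) (hp2 : p ≠ 2) (hq : q = p ^ e) (hq5 : 5 ≤ q)
    (k : Type*) [Field k] [CharP k p]
    (f₁ f₂ : RatFunc k)
    (hf₁ : f₁ = RatFunc.X ^ ((q + 1) / 2) / (RatFunc.X ^ q - RatFunc.X))
    (hf₂ : f₂ = (RatFunc.X - 1) / (RatFunc.X ^ q - RatFunc.X)) :
    IntermediateField.adjoin k {f₁, f₂} = ⊤ := by
  have : Fact p.Prime := ⟨hp⟩
  subst hq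
  set F := IntermediateField.adjoin k {f₁, f₂}
  have hf₁F : f₁ ∈ F := IntermediateField.subset_adjoin k _ (by simp)
  have hf₂F : f₂ ∈ F := IntermediateField.subset_adjoin k _ (by simp)
  set Y : RatFunc k := X - 1
  have hY : Y ≠ 0 := X_sub_one_ne_zero
  have hu : (X ^ p ^ e - X : RatFunc k) ≠ 0 := X_pow_sub_X_ne_zero (by omega)
  have hm : 2 * ((p ^ e + 1) / 2) = p ^ e + 1 :=
    Nat.mul_div_cancel' (hp.odd_of_ne_two hp2).pow.add_one.two_dvd
  have hhF : Y ^ (p ^ e - 1) ∈ F := by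
    rw [X_sub_one_pow_pred, ← hf₂]
    exact add_mem (one_mem F) (inv_mem hf₂F)
  have hgF : X ^ ((p ^ e + 1) / 2) / Y ∈ F := by
    convert div_mem hf₁F hf₂F using 1
    rw [hf₁, hf₂]
    field_simp
  have hpow : Y⁻¹ ^ p ^ e = (Y ^ (p ^ e - 1))⁻¹ * Y⁻¹ := by
    rw [← mul_inv, ← pow_succ, Nat.sub_add_cancel (by omega), inv_pow]
  have hne := inv_mul_one_add_ne_one_add_pow p e (h := Y ^ (p ^ e - 1)) (pow_ne_zero _ hY)
    (by rw [← pow_mul]; exact X_sub_one_pow_ne_one (Nat.mul_ne_zero (by omega) (by omega)))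
  have hYF : Y⁻¹ ∈ F :=
    Subfield.mem_of_sq_add_mul_add_eq_zero_of_pow_eq_mul p e F.toSubfield (inv_mem hhF)
      (add_mem (one_mem F) hhF) (sub_mem hhF (pow_mem hgF 2)) (inv_ne_zero (pow_ne_zero _ hY))
      hne hpow (inv_X_sub_one_sq_add p e hm)
  have hXF : X ∈ F := by simpa [Y] using add_mem (one_mem F) (inv_mem hYF)
  exact eq_top_iff.2 (adjoin_X.symm.le.trans (IntermediateField.adjoin_simple_le_iff.2 hXF))

/-- The intermediate field of `k(X)/k` generated by `f₁ = X^((q+1)/2)/(X^q - X)` and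
`f₂ = (X-1)/(X^q - X)` is all of `k(X)` (birationality of the parametrization `φ₁`). -/
theorem stmt_6 (p e q : ℕ) (hp : p.Prime) (hp2 : p ≠ 2) (hq : q = p ^ e) (hq5 : 5 ≤ q)
    (k : Type*) [Field k] [IsAlgClosed k] [CharP k p]
    (f₁ f₂ : RatFunc k)
    (hf₁ : f₁ = RatFunc.X ^ ((q + 1) / 2) / (RatFunc.X ^ q - RatFunc.X))
    (hf₂ : f₂ = (RatFunc.X - 1) / (RatFunc.X ^ q - RatFunc.X)) :
    IntermediateField.adjoin k {f₁, f₂} = ⊤ :=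
  stmt_6_general p e q hp hp2 hq hq5 k f₁ f₂ hf₁ hf₂
end

section
/- Let γ ∈ k satisfy γ^q = γ and γ ∉ {0, 1, −1}, and let f = X^{(q+1)/2} + γ·X^{−(q+1)/2} ∈ k(X). Then the field extension k(X) over the intermediate field k(f) generated by f over k is a Galois extension, and its Galois group is isomorphic to the dihedral group of order q+1 (DihedralGroup ((q+1)/2)). (This is the field-theoretic content of the statement that P₁ = (0:1:0) is an outer Galois point for the curve C₃ parametrized by (s:t) ↦ (s^{(q+1)/2}t^{(q+1)/2} : (s+t)^{q+1} : s^{q+1} + γt^{q+1}), with Galois group D_{q+1}.) -/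
/-!
Write `n = (q + 1) / 2`, which is prime to `p`, pick a primitive `n`-th root of unity `ζ` and
`c` with `c ^ n = γ`. The dihedral group `D_n` acts faithfully on `k(X)` through
`r i : X ↦ ζ ^ i X` and `sr i : X ↦ c ζ ^ i / X`, and every element of it fixes
`f = X ^ n + c ^ n X ^ (-n)`. On the other hand `X` is a root of `T ^ 2n - f T ^ n + γ` over
`k(f)`, so `[k(X) : k(f)] ≤ 2n = |D_n|`. An extension with at least as many automorphisms as its
degree is Galois, and the faithful action of `D_n` then exhausts its automorphism group.
-/

open RatFunc Polynomial IntermediateField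

theorem Nat.Prime.not_dvd_pow_add_one_div_two {p : ℕ} (hp : p.Prime) (hp2 : p ≠ 2) (e : ℕ) :
    ¬p ∣ (p ^ e + 1) / 2 := by
  intro h
  have h2 : 2 ∣ p ^ e + 1 := (hp.odd_of_ne_two hp2).pow.add_one.two_dvd
  have hdvd : p ∣ p ^ e + 1 := h.trans (Nat.div_dvd_of_dvd h2)
  rcases e with _ | e
  · exact hp2 ((Nat.prime_dvd_prime_iff_eq hp Nat.prime_two).mp hdvd)
  · have := (Nat.dvd_add_right (dvd_pow_self p e.succ_ne_zero)).mp hdvd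
    exact hp.one_lt.ne' (Nat.dvd_one.mp this)

theorem isGalois_and_nonempty_mulEquiv_of_injective {F E G : Type*} [Field F] [Field E]
    [Algebra F E] [FiniteDimensional F E] [Group G] {φ : G →* E ≃ₐ[F] E}
    (hφ : Function.Injective φ) (hG : Module.finrank F E ≤ Nat.card G) :
    IsGalois F E ∧ Nonempty ((E ≃ₐ[F] E) ≃* G) := by
  have hcard : Nat.card G ≤ Nat.card (E ≃ₐ[F] E) := Nat.card_le_card_of_injective φ hφ
  have hGal : Nat.card (E ≃ₐ[F] E) ≤ Module.finrank F E :=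
    Nat.card_eq_fintype_card (α := E ≃ₐ[F] E) ▸ AlgEquiv.card_le
  have hbij := hφ.bijective_of_nat_card_le (by omega)
  exact ⟨IsGalois.of_card_aut_eq_finrank F E (by omega),
    ⟨(MulEquiv.ofBijective φ hbij).symm⟩⟩

namespace RatFunc

variable {K : Type*} [Field K]

theorem transcendental_of_adjoin_eq_top {g : K⟮X⟯} (hg : K⟮g⟯ = ⊤) :
    Transcendental K g := by
  intro halg
  have : FiniteDimensional K K⟮g⟯ := adjoin.finiteDimensional halg.isIntegral
  rw [hg] at this
  have : FiniteDimensional K K⟮X⟯ := topEquiv.toLinearEquiv.finiteDimensional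
  exact Algebra.transcendental_iff_not_isAlgebraic.mp inferInstance
    (Algebra.IsAlgebraic.of_finite K K⟮X⟯)

noncomputable def algEquivOfAdjoinEqTop (g : K⟮X⟯) (hg : K⟮g⟯ = ⊤) : K⟮X⟯ ≃ₐ[K] K⟮X⟯ :=
  (algEquivOfTranscendental g (transcendental_of_adjoin_eq_top hg)).trans
    ((equivOfEq hg).trans topEquiv)

@[simp]
theorem algEquivOfAdjoinEqTop_X (g : K⟮X⟯) (hg : K⟮g⟯ = ⊤) :
    algEquivOfAdjoinEqTop g hg X = g := by
  simp [algEquivOfAdjoinEqTop]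

theorem algHom_ext {L : Type*} [Field L] [Algebra K L] {σ τ : K⟮X⟯ →ₐ[K] L}
    (h : σ X = τ X) : σ = τ := by
  have hpoly (p : K[X]) : σ (algebraMap K[X] K⟮X⟯ p) = τ (algebraMap K[X] K⟮X⟯ p) := by
    rw [← aeval_X_left_eq_algebraMap, ← aeval_algHom_apply, ← aeval_algHom_apply, h]
  ext x
  rw [← num_div_denom x, map_div₀, map_div₀, hpoly, hpoly]

theorem algEquiv_ext {σ τ : K⟮X⟯ ≃ₐ[K] K⟮X⟯} (h : σ X = τ X) : σ = τ :=
  AlgEquiv.coe_toAlgHom_injective (algHom_ext h)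

theorem adjoin_C_mul_X_eq_top {a : K} (ha : a ≠ 0) : K⟮C a * X⟯ = ⊤ := by
  rw [eq_top_iff, ← adjoin_X, adjoin_simple_le_iff]
  have h := mul_mem (IntermediateField.algebraMap_mem K⟮C a * X⟯ a⁻¹)
    (mem_adjoin_simple_self K (C a * X))
  rwa [algebraMap_eq_C, ← mul_assoc, ← map_mul, inv_mul_cancel₀ ha, map_one, one_mul] at h

theorem adjoin_C_mul_X_inv_eq_top {a : K} (ha : a ≠ 0) : K⟮C a * X⁻¹⟯ = ⊤ := by
  rw [eq_top_iff, ← adjoin_X, adjoin_simple_le_iff]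
  have h := mul_mem (IntermediateField.algebraMap_mem K⟮C a * X⁻¹⟯ a)
    (inv_mem (mem_adjoin_simple_self K (C a * X⁻¹)))
  rwa [algebraMap_eq_C, mul_inv, inv_inv, ← mul_assoc, ← map_inv₀, ← map_mul,
    mul_inv_cancel₀ ha, map_one, one_mul] at h

theorem finiteDimensional_and_finrank_le_of_aeval_X (E : IntermediateField K K⟮X⟯) {P : E[X]}
    (hP : P.Monic) (hPX : aeval (X : K⟮X⟯) P = 0) :
    FiniteDimensional E K⟮X⟯ ∧ Module.finrank E K⟮X⟯ ≤ P.natDegree := by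
  have hX : IsIntegral E (X : K⟮X⟯) := ⟨P, hP, hPX⟩
  have e := (IntermediateField.adjoinXEquiv E).toLinearEquiv
  have := adjoin.finiteDimensional hX
  refine ⟨e.finiteDimensional, ?_⟩
  rw [← e.finrank_eq, adjoin.finrank hX]
  exact natDegree_le_natDegree (minpoly.min E _ hP hPX)

theorem finiteDimensional_and_finrank_adjoin_X_pow_add_le {n : ℕ} (hn : n ≠ 0) (a : K) :
    FiniteDimensional K⟮X ^ n + C a * (X ^ n)⁻¹⟯ K⟮X⟯ ∧
      Module.finrank K⟮X ^ n + C a * (X ^ n)⁻¹⟯ K⟮X⟯ ≤ 2 * n := by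
  set f : K⟮X⟯ := X ^ n + C a * (X ^ n)⁻¹ with hf
  set P : K⟮f⟯[X] := Polynomial.X ^ (2 * n) -
    Polynomial.C (AdjoinSimple.gen K f) * Polynomial.X ^ n +
    Polynomial.C (algebraMap K K⟮f⟯ a) with hP
  have hPmonic : P.Monic := by
    rw [hP]; monicity!
    simp [hn, show ¬2 * n ≤ n by omega, show n ≤ 2 * n by omega]
  have hPdeg : P.natDegree ≤ 2 * n := by rw [hP]; compute_degree!; omega
  have hPX : aeval (RatFunc.X : K⟮X⟯) P = 0 := by
    rw [hP, map_add, map_sub, map_mul, map_pow, map_pow, aeval_X, aeval_C, aeval_C,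
      AdjoinSimple.algebraMap_gen, ← IsScalarTower.algebraMap_apply, algebraMap_eq_C, hf]
    field_simp [RatFunc.X_ne_zero]
    ring
  obtain ⟨hfin, hle⟩ := finiteDimensional_and_finrank_le_of_aeval_X _ hPmonic hPX
  exact ⟨hfin, hle.trans hPdeg⟩

section Dihedral

variable {n : ℕ} {ζ c : K}

theorem pow_val_add [NeZero n] (hζ : ζ ^ n = 1) (i j : ZMod n) :
    ζ ^ (i + j).val = ζ ^ i.val * ζ ^ j.val := by
  rw [ZMod.val_add, ← pow_eq_pow_mod _ hζ, pow_add]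

theorem pow_val_sub_mul [NeZero n] (hζ : ζ ^ n = 1) (i j : ZMod n) :
    ζ ^ (j - i).val * ζ ^ i.val = ζ ^ j.val := by
  rw [← pow_val_add hζ, sub_add_cancel]

noncomputable def dihedralImageX (ζ c : K) : DihedralGroup n → K⟮X⟯
  | .r i => C (ζ ^ i.val) * X
  | .sr i => C (c * ζ ^ i.val) * X⁻¹

theorem adjoin_dihedralImageX_eq_top (hζ : ζ ≠ 0) (hc : c ≠ 0) :
    ∀ d : DihedralGroup n, K⟮dihedralImageX ζ c d⟯ = ⊤
  | .r _ => adjoin_C_mul_X_eq_top (pow_ne_zero _ hζ)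
  | .sr _ => adjoin_C_mul_X_inv_eq_top (mul_ne_zero hc (pow_ne_zero _ hζ))

theorem dihedralImageX_one : dihedralImageX ζ c (1 : DihedralGroup n) = X := by
  rw [DihedralGroup.one_def, dihedralImageX, ZMod.val_zero, pow_zero, map_one, one_mul]

theorem dihedralImageX_mul [NeZero n] (hζ : ζ ^ n = 1) (hζ0 : ζ ≠ 0) (hc : c ≠ 0)
    (d₁ d₂ : DihedralGroup n) :
    dihedralImageX ζ c (d₁ * d₂) =
      algEquivOfAdjoinEqTop _ (adjoin_dihedralImageX_eq_top hζ0 hc d₁) (dihedralImageX ζ c d₂) := by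
  rcases d₁ with i | i <;> rcases d₂ with j | j <;>
    simp only [DihedralGroup.r_mul_r, DihedralGroup.r_mul_sr, DihedralGroup.sr_mul_r,
      DihedralGroup.sr_mul_sr, dihedralImageX, map_mul, map_inv₀, AlgEquiv.commutes,
      algEquivOfAdjoinEqTop_X, ← algebraMap_eq_C]
  · rw [pow_val_add hζ, map_mul]; ring
  · rw [← pow_val_sub_mul hζ i j, map_mul]; field_simp [X_ne_zero, hζ0, hc]
  · rw [pow_val_add hζ, map_mul]; ring
  · rw [← pow_val_sub_mul hζ i j, map_mul]; field_simp [X_ne_zero, hζ0, hc]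

noncomputable def dihedralAut [NeZero n] (hζ : IsPrimitiveRoot ζ n) (hc : c ≠ 0) :
    DihedralGroup n →* K⟮X⟯ ≃ₐ[K] K⟮X⟯ where
  toFun d :=
    algEquivOfAdjoinEqTop _ (adjoin_dihedralImageX_eq_top (hζ.ne_zero (NeZero.ne n)) hc d)
  map_one' := algEquiv_ext (by rw [algEquivOfAdjoinEqTop_X, dihedralImageX_one]; rfl)
  map_mul' d₁ d₂ := algEquiv_ext (by
    rw [algEquivOfAdjoinEqTop_X, AlgEquiv.mul_apply, algEquivOfAdjoinEqTop_X,
      dihedralImageX_mul hζ.pow_eq_one (hζ.ne_zero (NeZero.ne n)) hc])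

variable [NeZero n] (hζ : IsPrimitiveRoot ζ n) (hc : c ≠ 0)

@[simp]
theorem dihedralAut_apply_X (d : DihedralGroup n) :
    dihedralAut hζ hc d X = dihedralImageX ζ c d :=
  algEquivOfAdjoinEqTop_X _ _

theorem dihedralAut_injective : Function.Injective (dihedralAut hζ hc) := by
  refine (injective_iff_map_eq_one _).mpr fun d hd => ?_
  have hX := congr($(hd) X)
  rw [dihedralAut_apply_X, AlgEquiv.one_apply] at hX
  rcases d with i | i
  · have hCζ : C (ζ ^ i.val) = 1 := (mul_eq_right₀ X_ne_zero).mp hX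
    rw [DihedralGroup.one_def, DihedralGroup.r.injEq, ← ZMod.val_eq_zero]
    refine Nat.eq_zero_of_dvd_of_lt ?_ (ZMod.val_lt i)
    exact hζ.pow_eq_one_iff_dvd _ |>.mp ((map_eq_one_iff C C_injective).mp hCζ)
  · have hCc : C (c * ζ ^ i.val) ≠ 0 :=
      (_root_.map_ne_zero C).mpr (mul_ne_zero hc (pow_ne_zero _ (hζ.ne_zero (NeZero.ne n))))
    -- a reflection sends `X` to a function of degree `-1`
    have hdeg := congr(intDegree $(hX))
    rw [dihedralImageX, intDegree_mul hCc (inv_ne_zero X_ne_zero), intDegree_C, intDegree_inv,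
      intDegree_X] at hdeg
    omega

theorem dihedralAut_apply_X_pow_add (d : DihedralGroup n) :
    dihedralAut hζ hc d (X ^ n + C (c ^ n) * (X ^ n)⁻¹) = X ^ n + C (c ^ n) * (X ^ n)⁻¹ := by
  have hpow (i : ZMod n) : (ζ ^ i.val) ^ n = 1 := by
    rw [← pow_mul, mul_comm, pow_mul, hζ.pow_eq_one, one_pow]
  have hCc : C (c ^ n) ≠ 0 := (_root_.map_ne_zero C).mpr (pow_ne_zero _ hc)
  rw [map_add, map_mul, map_inv₀, map_pow, dihedralAut_apply_X, ← algebraMap_eq_C,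
    AlgEquiv.commutes, algebraMap_eq_C]
  rcases d with i | i <;>
    simp only [dihedralImageX, mul_pow, inv_pow, ← map_pow, hpow, mul_one, map_one, one_mul]
  field_simp
  ring

theorem adjoin_X_pow_add_le_fixedField :
    K⟮X ^ n + C (c ^ n) * (X ^ n)⁻¹⟯ ≤ fixedField (dihedralAut hζ hc).range := by
  rw [adjoin_simple_le_iff]
  rintro ⟨_, d, rfl⟩
  exact dihedralAut_apply_X_pow_add hζ hc d

end Dihedral

theorem isGalois_adjoin_X_pow_add_and_nonempty_mulEquiv_dihedralGroup {n : ℕ} [NeZero n]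
    {ζ c : K} (hζ : IsPrimitiveRoot ζ n) (hc : c ≠ 0) :
    IsGalois K⟮X ^ n + C (c ^ n) * (X ^ n)⁻¹⟯ K⟮X⟯ ∧
      Nonempty ((K⟮X⟯ ≃ₐ[K⟮X ^ n + C (c ^ n) * (X ^ n)⁻¹⟯] K⟮X⟯) ≃* DihedralGroup n) := by
  set F := K⟮X ^ n + C (c ^ n) * (X ^ n)⁻¹⟯
  obtain ⟨hfin, hle⟩ :=
    finiteDimensional_and_finrank_adjoin_X_pow_add_le (NeZero.ne n) (c ^ n)
  have hrange : (dihedralAut hζ hc).range ≤ F.fixingSubgroup :=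
    (le_iff_le _ _).mp (adjoin_X_pow_add_le_fixedField hζ hc)
  let φ := (fixingSubgroupEquiv F).toMonoidHom.comp
    ((dihedralAut hζ hc).codRestrict _ fun d => hrange ⟨d, rfl⟩)
  refine isGalois_and_nonempty_mulEquiv_of_injective (φ := φ) ?_ (DihedralGroup.nat_card ▸ hle)
  exact (fixingSubgroupEquiv F).injective.comp fun d₁ d₂ h =>
    dihedralAut_injective hζ hc congr(Subtype.val $h)

end RatFunc

theorem stmt_8_general (p e q : ℕ) (hp : p.Prime) (hp2 : p ≠ 2) (hq : q = p ^ e)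
    (k : Type*) [Field k] [IsAlgClosed k] [CharP k p]
    (γ : k) (hγ0 : γ ≠ 0)
    (f : RatFunc k)
    (hf : f = RatFunc.X ^ ((q + 1) / 2) + RatFunc.C γ * (RatFunc.X ^ ((q + 1) / 2))⁻¹) :
    IsGalois (IntermediateField.adjoin k {f}) (RatFunc k) ∧
      Nonempty ((RatFunc k ≃ₐ[IntermediateField.adjoin k {f}] RatFunc k) ≃*
        DihedralGroup ((q + 1) / 2)) := by
  subst hq hf
  set n := (p ^ e + 1) / 2
  have : NeZero (n : k) :=
    ⟨(CharP.cast_eq_zero_iff k p n).not.mpr (hp.not_dvd_pow_add_one_div_two hp2 e)⟩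
  have : NeZero n := NeZero.of_neZero_natCast k
  obtain ⟨ζ, hζ⟩ := HasEnoughRootsOfUnity.exists_primitiveRoot k n
  obtain ⟨c, rfl⟩ := IsAlgClosed.exists_pow_nat_eq γ (NeZero.pos n)
  exact RatFunc.isGalois_adjoin_X_pow_add_and_nonempty_mulEquiv_dihedralGroup hζ
    (ne_zero_pow (NeZero.ne n) hγ0)

/-- For `γ ∈ 𝔽_q \ {0, ±1}` and `f = X^((q+1)/2) + γ·X^(-(q+1)/2) ∈ k(X)`, the extension
`k(X)/k(f)` is Galois with Galois group isomorphic to the dihedral group of order `q + 1`. -/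
theorem stmt_8 (p e q : ℕ) (hp : p.Prime) (hp2 : p ≠ 2) (hq : q = p ^ e) (hq5 : 5 ≤ q)
    (k : Type*) [Field k] [IsAlgClosed k] [CharP k p]
    (γ : k) (hγq : γ ^ q = γ) (hγ0 : γ ≠ 0) (hγ1 : γ ≠ 1) (hγm1 : γ ≠ -1)
    (f : RatFunc k)
    (hf : f = RatFunc.X ^ ((q + 1) / 2) + RatFunc.C γ * (RatFunc.X ^ ((q + 1) / 2))⁻¹) :
    IsGalois (IntermediateField.adjoin k {f}) (RatFunc k) ∧
      Nonempty ((RatFunc k ≃ₐ[IntermediateField.adjoin k {f}] RatFunc k) ≃*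
        DihedralGroup ((q + 1) / 2)) :=
  stmt_8_general p e q hp hp2 hq k γ hγ0 f hf
end

section
/- Let n = (q+1)/2, let ζ ∈ k be a primitive n-th root of unity, and let δ ∈ k be nonzero. Then the subgroup of PGL(2,k) generated by the classes of the matrices [[ζ,0],[0,1]] and [[0,1],[δ,0]] is isomorphic to the dihedral group of order q+1 (DihedralGroup ((q+1)/2)). -/
/-!
The class `σ` is the image of the primitive `n`-th root of unity `ζ` under the injective
homomorphism `c ↦ [c 0; 0 1]` from `kˣ` to `PGL(2,k)`, so it has order `n`. The classes `τ` and
`τσ` come from anti-diagonal matrices, whose squares are scalar, so both are involutions. These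
are the relations of the presentation `⟨r, s | rⁿ, s², (sr)²⟩` of the dihedral group, and the
induced map is injective because `σ` has order exactly `n` and no anti-diagonal matrix is
proportional to a diagonal one, i.e. `τ ∉ ⟨σ⟩`.
-/

open Matrix

namespace DihedralGroup

variable {G : Type*} [Group G] {n : ℕ} [NeZero n] {a b : G}

lemma pow_val_add (ha : a ^ n = 1) (i j : ZMod n) :
    a ^ (i + j).val = a ^ i.val * a ^ j.val := by
  rw [ZMod.val_add, ← pow_eq_pow_mod _ ha, pow_add]

lemma pow_val_sub (ha : a ^ n = 1) (i j : ZMod n) :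
    a ^ (j - i).val = (a ^ i.val)⁻¹ * a ^ j.val := by
  rw [eq_inv_mul_iff_mul_eq, ← pow_val_add ha, add_sub_cancel]

variable (n) in
def lift (ha : a ^ n = 1) (hb : b * b = 1) (hba : b * a * (b * a) = 1) :
    DihedralGroup n →* G where
  toFun
    | r i => a ^ i.val
    | sr i => b * a ^ i.val
  map_one' := by
    show a ^ (0 : ZMod n).val = 1
    rw [ZMod.val_zero, pow_zero]
  map_mul' := by
    have hab : SemiconjBy b a⁻¹ a := by
      have hbab : b * a * b = a⁻¹ := eq_inv_of_mul_eq_one_left (by rwa [← mul_assoc] at hba)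
      rw [SemiconjBy, ← hbab, ← mul_assoc, ← mul_assoc, hb, one_mul]
    have hconj (m : ℕ) : a ^ m * b = b * (a ^ m)⁻¹ := by
      simpa only [inv_pow] using (hab.pow_right m).symm
    rintro (i | i) (j | j)
    · simp only [r_mul_r, pow_val_add ha]
    · simp only [r_mul_sr, pow_val_sub ha, ← mul_assoc, hconj]
    · simp only [sr_mul_r, pow_val_add ha, mul_assoc]
    · show a ^ (j - i).val = b * a ^ i.val * (b * a ^ j.val)
      rw [pow_val_sub ha, mul_assoc b, ← mul_assoc _ b, hconj, ← mul_assoc, ← mul_assoc, hb,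
        one_mul]

section Lift

variable (ha : a ^ n = 1) (hb : b * b = 1) (hba : b * a * (b * a) = 1)

@[simp] lemma lift_r (i : ZMod n) : lift n ha hb hba (r i) = a ^ i.val := rfl

@[simp] lemma lift_sr (i : ZMod n) : lift n ha hb hba (sr i) = b * a ^ i.val := rfl

lemma range_lift : (lift n ha hb hba).range = Subgroup.closure {a, b} := by
  apply le_antisymm
  · rintro _ ⟨i | i, rfl⟩
    · exact pow_mem (Subgroup.subset_closure (by simp)) _
    · exact mul_mem (Subgroup.subset_closure (by simp))
        (pow_mem (Subgroup.subset_closure (by simp)) _)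
  · rw [Subgroup.closure_le, Set.insert_subset_iff, Set.singleton_subset_iff]
    refine ⟨⟨r 1, ?_⟩, ⟨sr 0, by simp⟩⟩
    rw [lift_r, ZMod.val_one_eq_one_mod, ← pow_eq_pow_mod 1 ha, pow_one]

lemma lift_injective (hord : orderOf a = n) (hb_notMem : b ∉ Subgroup.zpowers a) :
    Function.Injective (lift n ha hb hba) := by
  rw [injective_iff_map_eq_one]
  rintro (i | i) h
  · rw [lift_r] at h
    obtain rfl : i = 0 := (ZMod.val_eq_zero i).mp <|
      Nat.eq_zero_of_dvd_of_lt (hord ▸ orderOf_dvd_of_pow_eq_one h :) i.val_lt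
    rfl
  · rw [lift_sr, mul_eq_one_iff_eq_inv] at h
    exact absurd (h ▸ inv_mem (pow_mem (Subgroup.mem_zpowers a) _)) hb_notMem

end Lift

noncomputable def closureEquiv (hord : orderOf a = n) (hb : b * b = 1)
    (hba : b * a * (b * a) = 1) (hb_notMem : b ∉ Subgroup.zpowers a) :
    Subgroup.closure {a, b} ≃* DihedralGroup n :=
  have ha : a ^ n = 1 := hord ▸ pow_orderOf_eq_one a
  (MulEquiv.subgroupCongr (range_lift ha hb hba).symm).trans
    (MonoidHom.ofInjective (lift_injective ha hb hba hord hb_notMem)).symm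

end DihedralGroup

namespace Matrix.GeneralLinearGroup

variable {n R : Type*} [Fintype n] [DecidableEq n] [CommRing R]

lemma quotientCenter_mk_eq_mk_iff {X Y : GL n R} :
    (X : GL n R ⧸ Subgroup.center (GL n R)) = Y ↔ ∃ c : R, (X : Matrix n n R) = c • Y := by
  rw [eq_comm, QuotientGroup.eq, mem_center_iff_val_mem_range_scalar]
  refine exists_congr fun c ↦ ?_
  rw [scalar_apply, ← smul_one_eq_diagonal, eq_comm, Units.val_mul, Units.inv_mul_eq_iff_eq_mul,
    Matrix.mul_smul, mul_one]

lemma quotientCenter_mk_eq_one_iff {X : GL n R} :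
    (X : GL n R ⧸ Subgroup.center (GL n R)) = 1 ↔ ∃ c : R, (X : Matrix n n R) = c • 1 := by
  rw [← QuotientGroup.mk_one, quotientCenter_mk_eq_mk_iff, Units.val_one]

end Matrix.GeneralLinearGroup

namespace PGL2

open GeneralLinearGroup

variable {k : Type*} [Field k]

def torus : kˣ →* PGL2 k :=
  (QuotientGroup.mk' _).comp
    { toFun c := mkOfDetNeZero !![(c : k), 0; 0, 1] (by simp [det_fin_two_of])
      map_one' := by ext i j; fin_cases i <;> fin_cases j <;> rfl
      map_mul' c d := by ext i j; fin_cases i <;> fin_cases j <;> simp }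

lemma torus_apply (c : kˣ) :
    torus c = (mkOfDetNeZero !![(c : k), 0; 0, 1] (by simp [det_fin_two_of]) : PGL2 k) := rfl

lemma torus_injective : Function.Injective (torus : kˣ →* PGL2 k) := by
  rw [injective_iff_map_eq_one]
  intro u h
  obtain ⟨s, hs⟩ := quotientCenter_mk_eq_one_iff.mp h
  have hu : (u : k) = s := by simpa using congrFun (congrFun hs 0) 0
  have h1 : (1 : k) = s := by simpa using congrFun (congrFun hs 1) 1
  exact Units.ext (hu.trans h1.symm)

def antidiag (c : k) (hc : c ≠ 0) : GL (Fin 2) k :=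
  mkOfDetNeZero !![0, 1; c, 0] (by simp [det_fin_two_of, hc])

variable {c : k} (hc : c ≠ 0)

lemma mk_antidiag_mul_self : (antidiag c hc : PGL2 k) * antidiag c hc = 1 := by
  rw [← QuotientGroup.mk_mul, quotientCenter_mk_eq_one_iff]
  refine ⟨c, ?_⟩
  ext i j; fin_cases i <;> fin_cases j <;> simp [antidiag]

lemma mk_antidiag_mul_torus (u : kˣ) :
    (antidiag c hc : PGL2 k) * torus u = antidiag (c * u) (mul_ne_zero hc u.ne_zero) := by
  rw [torus_apply, ← QuotientGroup.mk_mul]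
  congr 1
  ext i j; fin_cases i <;> fin_cases j <;> simp [antidiag]

lemma mk_antidiag_notMem_range_torus :
    (antidiag c hc : PGL2 k) ∉ (torus : kˣ →* PGL2 k).range := by
  rintro ⟨u, hu⟩
  rw [torus_apply, eq_comm, quotientCenter_mk_eq_mk_iff] at hu
  obtain ⟨s, hs⟩ := hu
  simpa [antidiag] using congrFun (congrFun hs 0) 1

end PGL2

/-- For `ζ` a primitive `(q+1)/2`-th root of unity and `δ ≠ 0`, the subgroup of
`PGL(2,k)` generated by the classes of `[[ζ,0],[0,1]]` and `[[0,1],[δ,0]]` is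
isomorphic to the dihedral group of order `q + 1`. -/
theorem stmt_10 (q : ℕ) (hq5 : 5 ≤ q)
    (k : Type*) [Field k]
    (ζ δ : k) (hζ : IsPrimitiveRoot ζ ((q + 1) / 2)) (hδ : δ ≠ 0)
    (σ τ : PGL2 k)
    (hσ : σ = QuotientGroup.mk (Matrix.GeneralLinearGroup.mkOfDetNeZero
      !![ζ, 0; 0, (1 : k)] (by
        simp only [Matrix.det_fin_two_of]
        have := hζ.ne_zero (by omega)
        simp [this])))
    (hτ : τ = QuotientGroup.mk (Matrix.GeneralLinearGroup.mkOfDetNeZero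
      !![(0 : k), 1; δ, 0] (by simp [Matrix.det_fin_two_of, hδ]))) :
    Nonempty (↥(Subgroup.closure {σ, τ}) ≃* DihedralGroup ((q + 1) / 2)) := by
  have : NeZero ((q + 1) / 2) := ⟨by omega⟩
  let u : kˣ := Units.mk0 ζ (hζ.ne_zero (NeZero.ne _))
  have hu : IsPrimitiveRoot u ((q + 1) / 2) := IsPrimitiveRoot.coe_units_iff.mp hζ
  obtain rfl : σ = PGL2.torus u := hσ
  obtain rfl : τ = PGL2.antidiag δ hδ := hτ
  refine ⟨DihedralGroup.closureEquiv ?_ (PGL2.mk_antidiag_mul_self hδ) ?_ ?_⟩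
  · rw [orderOf_injective _ PGL2.torus_injective, ← hu.eq_orderOf]
  · rw [PGL2.mk_antidiag_mul_torus]
    exact PGL2.mk_antidiag_mul_self _
  · exact fun h ↦ PGL2.mk_antidiag_notMem_range_torus hδ
      (Subgroup.zpowers_le.mpr (MonoidHom.mem_range.mpr ⟨u, rfl⟩) h)
end

section
/- Let γ ∈ k with γ ≠ 1, and let f = X^{(q+1)/2}/((X+1)^{q+1} − X^{q+1} − γ) ∈ k(X). Then the degree of the field extension k(X) over the intermediate field k(f) generated by f over k is exactly q. (This expresses that the projection of the curve C₃ from the point Q = φ₃(1:0) = (0:1:1) has degree q, and hence that the parametrization φ₃: (s:t) ↦ (s^{(q+1)/2}t^{(q+1)/2} : (s+t)^{q+1} : s^{q+1} + γt^{q+1}) is birational onto its image.) -/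
/-!
Frobenius gives `(X + 1)^(q+1) - X^(q+1) = (X^q + 1)(X + 1) - X^(q+1) = X^q + X + 1`, so
`f = X^((q+1)/2) / (X^q + X + (1 - γ))`. For `γ ≠ 1` this fraction is reduced, and by the degree
formula behind Lüroth's theorem `[k(X) : k(f)]` is the larger of the degrees of the reduced
numerator and denominator, here `q`.
-/

open Polynomial

theorem add_one_pow_expChar_pow_succ_sub {R : Type*} [CommRing R] (p : ℕ) [ExpChar R p]
    (x : R) (e : ℕ) : (x + 1) ^ (p ^ e + 1) - x ^ (p ^ e + 1) = x ^ p ^ e + x + 1 := by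
  rw [pow_succ, add_pow_expChar_pow, one_pow]
  ring

theorem Polynomial.isCoprime_X_pow_of_coeff_zero_ne_zero {K : Type*} [Field K] {d : K[X]}
    (hd : d.coeff 0 ≠ 0) (m : ℕ) : IsCoprime (X ^ m) d :=
  (irreducible_X.coprime_iff_not_dvd.mpr (by rwa [X_dvd_iff])).pow_left

namespace RatFunc

variable {K : Type*} [Field K] {p q : K[X]}

theorem denom_div_of_isCoprime (hpq : IsCoprime p q) (hq : q.Monic) :
    (algebraMap K[X] K⟮X⟯ p / algebraMap K[X] K⟮X⟯ q).denom = q := by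
  set x := algebraMap K[X] K⟮X⟯ p / algebraMap K[X] K⟮X⟯ q
  have hx : x.num * q = p * x.denom := (num_mul_eq_mul_denom_iff hq.ne_zero).mpr rfl
  have hq_dvd : q ∣ x.denom := hpq.symm.dvd_of_dvd_mul_left ⟨x.num, by rw [← hx, mul_comm]⟩
  exact eq_of_monic_of_associated (monic_denom x) hq
    (associated_of_dvd_dvd (denom_div_dvd p q) hq_dvd)

theorem num_div_of_isCoprime (hpq : IsCoprime p q) (hq : q.Monic) :
    (algebraMap K[X] K⟮X⟯ p / algebraMap K[X] K⟮X⟯ q).num = p := by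
  have hx := (num_mul_eq_mul_denom_iff (x := algebraMap K[X] K⟮X⟯ p / algebraMap K[X] K⟮X⟯ q)
    hq.ne_zero).mpr rfl
  rw [denom_div_of_isCoprime hpq hq] at hx
  exact mul_right_cancel₀ hq.ne_zero hx

theorem finrank_adjoin_div_of_isCoprime (hpq : IsCoprime p q) (hq : q.Monic) :
    Module.finrank (IntermediateField.adjoin K {algebraMap K[X] K⟮X⟯ p / algebraMap K[X] K⟮X⟯ q})
      K⟮X⟯ = max p.natDegree q.natDegree := by
  rw [finrank_eq_max_natDegree, num_div_of_isCoprime hpq hq, denom_div_of_isCoprime hpq hq]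

end RatFunc

theorem stmt_13_general (p e q : ℕ) (hp : p.Prime) (hq : q = p ^ e) (hq5 : 5 ≤ q)
    (k : Type*) [Field k] [CharP k p]
    (γ : k) (hγ1 : γ ≠ 1)
    (f : RatFunc k)
    (hf : f = RatFunc.X ^ ((q + 1) / 2) /
      ((RatFunc.X + 1) ^ (q + 1) - RatFunc.X ^ (q + 1) - RatFunc.C γ)) :
    Module.finrank (IntermediateField.adjoin k {f}) (RatFunc k) = q := by
  have : Fact p.Prime := ⟨hp⟩
  set d : k[X] := X ^ q + (X + C (1 - γ)) with hd
  have hd_natDegree : d.natDegree = q := by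
    rw [hd, natDegree_add_eq_left_of_natDegree_lt] <;>
      simp only [natDegree_X_pow, natDegree_X_add_C]
    omega
  have hd_monic : d.Monic :=
    monic_X_pow_add (by rw [degree_X_add_C]; exact_mod_cast (by omega : 1 < q))
  have hfrob : ((RatFunc.X : RatFunc k) + 1) ^ (q + 1) - RatFunc.X ^ (q + 1) =
      RatFunc.X ^ q + RatFunc.X + 1 := hq ▸ add_one_pow_expChar_pow_succ_sub p _ e
  have hf_div :
      f = algebraMap k[X] (RatFunc k) (X ^ ((q + 1) / 2)) / algebraMap k[X] (RatFunc k) d := by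
    rw [hf, hfrob, hd]
    simp only [map_add, map_pow, RatFunc.algebraMap_X, RatFunc.algebraMap_C, map_sub, map_one]
    ring
  have hd_coeff_zero : d.coeff 0 = 1 - γ := by
    have hq0 : 0 ≠ q := by omega
    simp [hd, coeff_X_pow, hq0]
  have hcop : IsCoprime (X ^ ((q + 1) / 2)) d := isCoprime_X_pow_of_coeff_zero_ne_zero
    (by rw [hd_coeff_zero]; exact sub_ne_zero.mpr hγ1.symm) _
  rw [hf_div, RatFunc.finrank_adjoin_div_of_isCoprime hcop hd_monic, natDegree_X_pow,
    hd_natDegree]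
  omega

/-- For `γ ≠ 1` and `f = X^((q+1)/2)/((X+1)^(q+1) − X^(q+1) − γ) ∈ k(X)`, the degree of
the extension `k(X)/k(f)` is exactly `q` (so the parametrization `φ₃` is birational). -/
theorem stmt_13 (p e q : ℕ) (hp : p.Prime) (hp2 : p ≠ 2) (hq : q = p ^ e) (hq5 : 5 ≤ q)
    (k : Type*) [Field k] [IsAlgClosed k] [CharP k p]
    (γ : k) (hγ1 : γ ≠ 1)
    (f : RatFunc k)
    (hf : f = RatFunc.X ^ ((q + 1) / 2) /
      ((RatFunc.X + 1) ^ (q + 1) - RatFunc.X ^ (q + 1) - RatFunc.C γ)) :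
    Module.finrank (IntermediateField.adjoin k {f}) (RatFunc k) = q :=
  stmt_13_general p e q hp hq hq5 k γ hγ1 f hf
end

section
/- Let γ ∈ k satisfy γ^q = γ and γ ∉ {0, 1, −1}. Then for every s ∈ k, the two vectors (s^{(q+1)/2}, (s+1)^{q+1}, s^{q+1} + γ) and (c·s^{(q−1)/2}, (s+1)^q, s^q) in k³, where c ∈ k is the image of the natural number (q+1)/2, are linearly independent over k; equivalently, the 2×3 matrix with these rows has rank 2. (This expresses that the differential of the parametrization φ₃ of the curve C₃ is injective at every point (s:1).) -/
/-!
Since `q` is odd and vanishes in `k`, `c = (q + 1) / 2 = 1 / 2` in `k`. Suppose `a • v + b • w = 0`. The second coordinates give `(s + 1)^q (a (s + 1) + b) = 0`.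
If `s = -1`, the first and third coordinates give `b = 2a` and `b = (1 + γ) a`, so `a = 0`
since `γ ≠ 1`. Otherwise `b = -a (s + 1)`, the third coordinates reduce to `a (γ - s^q) = 0`,
and for `a ≠ 0` the first coordinates force `s = 1`, whence `γ = s^q = 1`.
-/

theorem Nat.cast_div_two_succ_mul_two {R : Type*} [Semiring R] {q : ℕ} (hq : Odd q) :
    (((q + 1) / 2 : ℕ) : R) * 2 = q + 1 := by
  have hdiv : (q + 1) / 2 * 2 = q + 1 := Nat.div_mul_cancel hq.add_one.two_dvd
  exact_mod_cast congrArg (Nat.cast : ℕ → R) hdiv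

section TangentPair

variable {k : Type*} [Field k] {q m : ℕ} {γ c a b s : k}

theorem coeffs_eq_zero_of_eq_neg_one (hγ1 : γ ≠ 1) (hc : c * 2 = 1)
    (h0 : b * c - a = 0) (h2 : a * (1 + γ) - b = 0) : a = 0 ∧ b = 0 := by
  have ha : a * (1 - γ) = 0 := by
    linear_combination (-2) * h0 - 2 * c * h2 + a * (1 + γ) * hc
  have ha : a = 0 := (mul_eq_zero.mp ha).resolve_right (sub_ne_zero.mpr hγ1.symm)
  exact ⟨ha, by linear_combination -h2 + (1 + γ) * ha⟩

theorem coeff_eq_zero_of_ne_neg_one (hq : q ≠ 0) (hγ0 : γ ≠ 0) (hγ1 : γ ≠ 1) (hc : c * 2 = 1)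
    (hb : b = -(a * (s + 1))) (h0 : s ^ m * (a * s + b * c) = 0)
    (h2 : a * (s ^ (q + 1) + γ) + b * s ^ q = 0) : a = 0 := by
  by_contra ha
  have hsq : s ^ q = γ := by
    have h : a * (γ - s ^ q) = 0 := by linear_combination h2 - s ^ q * hb
    exact (sub_eq_zero.mp ((mul_eq_zero.mp h).resolve_left ha)).symm
  have hs0 : s ≠ 0 := by
    rintro rfl
    exact hγ0 (by rw [← hsq, zero_pow hq])
  have h0 : a * (s - 1) = 0 := by
    have h := (mul_eq_zero.mp h0).resolve_left (pow_ne_zero m hs0)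
    linear_combination 2 * h - 2 * c * hb + a * (s + 1) * hc
  have hs1 : s = 1 := sub_eq_zero.mp ((mul_eq_zero.mp h0).resolve_left ha)
  exact hγ1 (by rw [← hsq, hs1, one_pow])

theorem linearIndependent_tangent_pair (hq : Odd q) (hγ0 : γ ≠ 0) (hγ1 : γ ≠ 1)
    (hc : c * 2 = 1) (s : k) :
    LinearIndependent k
      ![(![s ^ (m + 1), (s + 1) ^ (q + 1), s ^ (q + 1) + γ] : Fin 3 → k),
        ![c * s ^ m, (s + 1) ^ q, s ^ q]] := by
  rw [LinearIndependent.pair_iff]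
  intro a b hab
  have h0 : s ^ m * (a * s + b * c) = 0 := by
    have h := congr_fun hab 0
    simp only [Pi.add_apply, Pi.smul_apply, Matrix.cons_val_zero, smul_eq_mul,
      Pi.zero_apply] at h
    linear_combination h
  have h1 : (s + 1) ^ q * (a * (s + 1) + b) = 0 := by
    have h := congr_fun hab 1
    simp only [Pi.add_apply, Pi.smul_apply, Matrix.cons_val_one, Matrix.cons_val_zero, smul_eq_mul,
      Pi.zero_apply] at h
    linear_combination h
  have h2 : a * (s ^ (q + 1) + γ) + b * s ^ q = 0 := by
    simpa using congr_fun hab 2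
  rcases eq_or_ne s (-1) with rfl | hs
  · simp only [hq.neg_one_pow, pow_succ, neg_one_mul, neg_neg] at h0 h2
    refine coeffs_eq_zero_of_eq_neg_one hγ1 hc ?_ (by linear_combination h2)
    have h := (mul_eq_zero.mp h0).resolve_left (pow_ne_zero m (neg_ne_zero.mpr one_ne_zero))
    linear_combination h
  · have hs1 : s + 1 ≠ 0 := fun h => hs (eq_neg_of_add_eq_zero_left h)
    have hb : b = -(a * (s + 1)) :=
      eq_neg_of_add_eq_zero_right ((mul_eq_zero.mp h1).resolve_left (pow_ne_zero q hs1))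
    have ha := coeff_eq_zero_of_ne_neg_one hq.pos.ne' hγ0 hγ1 hc hb h0 h2
    exact ⟨ha, by rw [hb, ha, zero_mul, neg_zero]⟩

end TangentPair

theorem stmt_14_general (p e q : ℕ) (hp : p.Prime) (hp2 : p ≠ 2) (hq : q = p ^ e) (hq5 : 5 ≤ q)
    (k : Type*) [Field k] [CharP k p]
    (γ : k) (hγ0 : γ ≠ 0) (hγ1 : γ ≠ 1)
    (c : k) (hc : c = (((q + 1) / 2 : ℕ) : k)) :
    ∀ s : k, LinearIndependent k
      ![(![s ^ ((q + 1) / 2), (s + 1) ^ (q + 1), s ^ (q + 1) + γ] : Fin 3 → k),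
        ![c * s ^ ((q - 1) / 2), (s + 1) ^ q, s ^ q]] := by
  intro s
  have he : e ≠ 0 := by rintro rfl; simp [hq] at hq5
  have hq_odd : Odd q := hq ▸ (hp.odd_of_ne_two hp2).pow
  have hq_zero : (q : k) = 0 := by rw [hq, Nat.cast_pow, CharP.cast_eq_zero, zero_pow he]
  have hc2 : c * 2 = 1 := by rw [hc, Nat.cast_div_two_succ_mul_two hq_odd, hq_zero, zero_add]
  rw [show (q + 1) / 2 = (q - 1) / 2 + 1 by omega]
  exact linearIndependent_tangent_pair hq_odd hγ0 hγ1 hc2 s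

/-- For `γ ∈ 𝔽_q \ {0, ±1}` and every `s ∈ k`, the vectors
`(s^((q+1)/2), (s+1)^(q+1), s^(q+1) + γ)` and `(c·s^((q-1)/2), (s+1)^q, s^q)` in `k³`,
where `c` is the image of `(q+1)/2` in `k`, are linearly independent over `k`
(the differential of the parametrization `φ₃` is injective at every `(s:1)`). -/
theorem stmt_14 (p e q : ℕ) (hp : p.Prime) (hp2 : p ≠ 2) (hq : q = p ^ e) (hq5 : 5 ≤ q)
    (k : Type*) [Field k] [IsAlgClosed k] [CharP k p]
    (γ : k) (hγq : γ ^ q = γ) (hγ0 : γ ≠ 0) (hγ1 : γ ≠ 1) (hγm1 : γ ≠ -1)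
    (c : k) (hc : c = (((q + 1) / 2 : ℕ) : k)) :
    ∀ s : k, LinearIndependent k
      ![(![s ^ ((q + 1) / 2), (s + 1) ^ (q + 1), s ^ (q + 1) + γ] : Fin 3 → k),
        ![c * s ^ ((q - 1) / 2), (s + 1) ^ q, s ^ q]] :=
  stmt_14_general p e q hp hp2 hq hq5 k γ hγ0 hγ1 c hc
end

section
/- Let γ ∈ k satisfy γ^q = γ, let c₁ ∈ k be the image of the natural number (q+1)/2 and c₂ ∈ k the image of the natural number (q²−1)/4. Then in the polynomial ring k[X], the determinant of the 3×3 matrix with rows (X^{(q+1)/2}, (X+1)^{q+1}, X^{q+1} + γ·1), (c₁·X^{(q−1)/2}, (X+1)^q, X^q), and (c₂·X^{(q−3)/2}, 0, 0) equals c₂ · X^{(q−3)/2} · (X+1)^q · (X − γ·1)^q. In particular, since c₂ ≠ 0 in k, its roots in k are exactly 0, −1 and γ. (This is the Hessian determinant computation showing that all flexes of the curve C₃ are (1:0), (0:1), (−1:1) and (γ:1).) -/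
/-!
Expanding along the last row, the determinant is `c₂ X^((q-3)/2)` times
`(X+1)^(q+1) X^q - (X^(q+1) + γ) (X+1)^q = (X+1)^q (X^q - γ)`, and `X^q - γ = (X - γ)^q`
because `γ` is fixed by the `q`-power Frobenius. Finally `4 c₂ = q² - 1 = -1` in `k`,
so `c₂ ≠ 0`.
-/

open Polynomial Matrix

theorem det_hessian_C₃ {R : Type*} [CommRing R] (n : ℕ) (a b c x g : R) :
    !![a, (x + 1) ^ (n + 1), x ^ (n + 1) + g;
       b, (x + 1) ^ n, x ^ n;
       c, 0, 0].det = c * (x + 1) ^ n * (x ^ n - g) := by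
  simp only [det_fin_three, of_apply, cons_val', cons_val_zero, cons_val_fin_one, cons_val_one,
    cons_val, mul_zero, sub_self, zero_add, add_zero]
  ring

theorem Nat.cast_sq_sub_one_div_four_ne_zero {R : Type*} [CommRing R] [Nontrivial R] {n : ℕ}
    (hn : Odd n) (h : (n : R) = 0) : (((n ^ 2 - 1) / 4 : ℕ) : R) ≠ 0 := by
  obtain ⟨m, rfl⟩ := hn
  have hdiv : ((2 * m + 1) ^ 2 - 1) / 4 = m * m + m := by
    rw [show (2 * m + 1) ^ 2 - 1 = 4 * (m * m + m) by ring_nf; omega,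
      Nat.mul_div_cancel_left _ (by norm_num)]
  have hfour : 4 * ((m * m + m : ℕ) : R) = -1 := by
    push_cast at h ⊢
    linear_combination (2 * (m : R) + 1) * h
  rw [hdiv]
  intro h0
  simp [h0] at hfour

theorem stmt_15_general (p e q : ℕ) (hp : p.Prime) (hp2 : p ≠ 2) (hq : q = p ^ e) (hq5 : 5 ≤ q)
    (k : Type*) [Field k] [CharP k p]
    (γ : k) (hγq : γ ^ q = γ)
    (c₁ c₂ : k) (hc₂ : c₂ = (((q ^ 2 - 1) / 4 : ℕ) : k))
    (M : Matrix (Fin 3) (Fin 3) k[X])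
    (hM : M = !![X ^ ((q + 1) / 2), (X + 1) ^ (q + 1), X ^ (q + 1) + C γ * 1;
                 C c₁ * X ^ ((q - 1) / 2), (X + 1) ^ q, X ^ q;
                 C c₂ * X ^ ((q - 3) / 2), 0, 0]) :
    M.det = C c₂ * X ^ ((q - 3) / 2) * (X + 1) ^ q * (X - C γ * 1) ^ q ∧
      c₂ ≠ 0 ∧
      ∀ x : k, M.det.eval x = 0 ↔ x = 0 ∨ x = -1 ∨ x = γ := by
  have := Fact.mk hp
  have he : e ≠ 0 := by rintro rfl; simp [hq] at hq5
  have hq_zero : (q : k) = 0 := by simp [hq, he]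
  have hc₂_ne : c₂ ≠ 0 :=
    hc₂ ▸ Nat.cast_sq_sub_one_div_four_ne_zero (hq ▸ (hp.odd_of_ne_two hp2).pow) hq_zero
  have hfrob : (X - C γ * 1 : k[X]) ^ q = X ^ q - C γ * 1 := by
    rw [mul_one, hq, sub_pow_expChar_pow, ← C_pow, ← hq, hγq]
  have hdet : M.det = C c₂ * X ^ ((q - 3) / 2) * (X + 1) ^ q * (X - C γ * 1) ^ q := by
    rw [hM, det_hessian_C₃, hfrob]
  refine ⟨hdet, hc₂_ne, fun x => ?_⟩
  have hm : (q - 3) / 2 ≠ 0 := by omega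
  have hq0 : q ≠ 0 := by omega
  simp [hdet, hc₂_ne, hm, hq0, add_eq_zero_iff_eq_neg, sub_eq_zero, or_assoc]

/-- Hessian determinant computation for the curve `C₃`: the determinant of the matrix with
rows `(X^((q+1)/2), (X+1)^(q+1), X^(q+1)+γ)`, `(c₁·X^((q-1)/2), (X+1)^q, X^q)`,
`(c₂·X^((q-3)/2), 0, 0)` equals `c₂·X^((q-3)/2)·(X+1)^q·(X−γ)^q`; in particular `c₂ ≠ 0`
and its roots in `k` are exactly `0`, `-1` and `γ`. -/
theorem stmt_15 (p e q : ℕ) (hp : p.Prime) (hp2 : p ≠ 2) (hq : q = p ^ e) (hq5 : 5 ≤ q)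
    (k : Type*) [Field k] [IsAlgClosed k] [CharP k p]
    (γ : k) (hγq : γ ^ q = γ)
    (c₁ c₂ : k) (hc₁ : c₁ = (((q + 1) / 2 : ℕ) : k)) (hc₂ : c₂ = (((q ^ 2 - 1) / 4 : ℕ) : k))
    (M : Matrix (Fin 3) (Fin 3) k[X])
    (hM : M = !![X ^ ((q + 1) / 2), (X + 1) ^ (q + 1), X ^ (q + 1) + C γ * 1;
                 C c₁ * X ^ ((q - 1) / 2), (X + 1) ^ q, X ^ q;
                 C c₂ * X ^ ((q - 3) / 2), 0, 0]) :
    M.det = C c₂ * X ^ ((q - 3) / 2) * (X + 1) ^ q * (X - C γ * 1) ^ q ∧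
      c₂ ≠ 0 ∧
      ∀ x : k, M.det.eval x = 0 ↔ x = 0 ∨ x = -1 ∨ x = γ :=
  stmt_15_general p e q hp hp2 hq hq5 k γ hγq c₁ c₂ hc₂ M hM
end

section
/- Let γ ∈ k satisfy γ^q = γ, γ^{(q−1)/2} = 1 and γ ≠ −1, and consider the polynomial P = ((X+1)(X + γ·1))^{(q+1)/2} − X^{q+1} + γ·1 ∈ k[X]. Then P has degree exactly q, its leading coefficient (the coefficient of X^q) equals c·(γ+1) where c ∈ k is the image of the natural number (q+1)/2 (in particular it is nonzero), and its constant coefficient equals 2γ. (This shows that the projection of the curve C₄ from the point Q = φ₄(1:0) = (0:1:1) has degree q, hence that φ₄ is birational onto its image.) -/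
open Polynomial

/-!
With `m = (q + 1) / 2`, the polynomial `((X + 1)(X + γ))^m` is monic of degree `2m = q + 1`, so
`X^(q+1)` cancels and the coefficient of `X^q` is `m(1 + γ)`. In characteristic `p` we have
`2m = q + 1 = 1`, so `m` is invertible, and `γ ≠ -1` makes this coefficient nonzero. The constant
coefficient is `γ^m + γ = 2γ`, since `γ^m = γ · γ^((q-1)/2) = γ`.
-/

namespace Polynomial

lemma IsMonicOfDegree.coeff_sub_X_pow_pred {R : Type*} [Ring R] {f : R[X]} {n : ℕ}
    (hf : IsMonicOfDegree f n) (hn : n ≠ 0) : (f - X ^ n).coeff (n - 1) = f.nextCoeff := by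
  rw [coeff_sub, coeff_X_pow, if_neg (by omega), sub_zero,
    nextCoeff_of_natDegree_pos (hf.natDegree_eq ▸ Nat.pos_of_ne_zero hn), hf.natDegree_eq]

section QuadraticPower

variable {R : Type*} [CommRing R] (a b c : R) {m : ℕ}

lemma isMonicOfDegree_X_add_C_mul_X_add_C_pow [Nontrivial R] (m : ℕ) :
    IsMonicOfDegree (((X + C a) * (X + C b)) ^ m) (2 * m) := by
  simpa [mul_comm] using ((isMonicOfDegree_X_add_one a).mul (isMonicOfDegree_X_add_one b)).pow m

lemma nextCoeff_X_add_C_mul_X_add_C_pow (m : ℕ) :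
    (((X + C a) * (X + C b)) ^ m).nextCoeff = m * (a + b) := by
  rw [((monic_X_add_C a).mul (monic_X_add_C b)).nextCoeff_pow,
    (monic_X_add_C a).nextCoeff_mul (monic_X_add_C b), nextCoeff_X_add_C, nextCoeff_X_add_C,
    nsmul_eq_mul]

lemma natDegree_X_add_C_mul_X_add_C_pow_sub_X_pow_add_C_lt [Nontrivial R] (hm : m ≠ 0) :
    (((X + C a) * (X + C b)) ^ m - X ^ (2 * m) + C c).natDegree < 2 * m :=
  (natDegree_add_le _ _).trans_lt <| max_lt
    ((isMonicOfDegree_X_add_C_mul_X_add_C_pow a b m).natDegree_sub_X_pow (by omega))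
    (by rw [natDegree_C]; omega)

lemma coeff_X_add_C_mul_X_add_C_pow_sub_X_pow_add_C_pred [Nontrivial R] (hm : m ≠ 0) :
    (((X + C a) * (X + C b)) ^ m - X ^ (2 * m) + C c).coeff (2 * m - 1) = m * (a + b) := by
  rw [coeff_add, (isMonicOfDegree_X_add_C_mul_X_add_C_pow a b m).coeff_sub_X_pow_pred (by omega),
    nextCoeff_X_add_C_mul_X_add_C_pow, coeff_C, if_neg (by omega), add_zero]

lemma coeff_X_add_C_mul_X_add_C_pow_sub_X_pow_add_C_zero (hm : m ≠ 0) :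
    (((X + C a) * (X + C b)) ^ m - X ^ (2 * m) + C c).coeff 0 = (a * b) ^ m + c := by
  simp [coeff_zero_eq_eval_zero, zero_pow (by omega : 2 * m ≠ 0)]

end QuadraticPower

end Polynomial

lemma cast_half_succ_mul_two {k : Type*} [Ring k] {n : ℕ} (hn : Odd n) (hnk : (n : k) = 0) :
    (((n + 1) / 2 : ℕ) : k) * 2 = 1 := by
  have h : (((n + 1) / 2 * 2 : ℕ) : k) = ((n + 1 : ℕ) : k) := by
    obtain ⟨t, rfl⟩ := hn
    congr 1
    omega
  simpa [hnk] using h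

theorem stmt_19_general (p e q : ℕ) (hp : p.Prime) (hp2 : p ≠ 2) (hq : q = p ^ e) (hq5 : 5 ≤ q)
    (k : Type*) [Field k] [CharP k p]
    (γ : k) (hγsq : γ ^ ((q - 1) / 2) = 1) (hγm1 : γ ≠ -1)
    (c : k) (hc : c = (((q + 1) / 2 : ℕ) : k))
    (P : k[X])
    (hP : P = ((X + 1) * (X + C γ * 1)) ^ ((q + 1) / 2) - X ^ (q + 1) + C γ * 1) :
    P.degree = q ∧ P.coeff q = c * (γ + 1) ∧ P.coeff q ≠ 0 ∧ P.coeff 0 = 2 * γ := by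
  have he : e ≠ 0 := by rintro rfl; simp [hq] at hq5
  have hqodd : Odd q := hq ▸ (hp.odd_of_ne_two hp2).pow
  set m := (q + 1) / 2
  have hm : m ≠ 0 := by omega
  have h2m : 2 * m = q + 1 := by obtain ⟨t, rfl⟩ := hqodd; omega
  have hPF : P = ((X + C 1) * (X + C γ)) ^ m - X ^ (2 * m) + C γ := by
    rw [hP, h2m, C_1, mul_one]
  have hqk : (q : k) = 0 := by
    rw [CharP.cast_eq_zero_iff k p, hq]
    exact dvd_pow_self p he
  have hc2 : c * 2 = 1 := hc ▸ cast_half_succ_mul_two hqodd hqk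
  have hPq : P.coeff q = c * (γ + 1) := by
    rw [hPF, show q = 2 * m - 1 by omega,
      coeff_X_add_C_mul_X_add_C_pow_sub_X_pow_add_C_pred _ _ _ hm, hc, add_comm γ]
  have hPq0 : P.coeff q ≠ 0 := by
    rw [hPq]
    exact mul_ne_zero (left_ne_zero_of_mul_eq_one hc2) fun h => hγm1 (eq_neg_of_add_eq_zero_left h)
  have hPdeg : P.degree ≤ q := by
    rw [hPF]
    exact degree_le_of_natDegree_le
      (by have := natDegree_X_add_C_mul_X_add_C_pow_sub_X_pow_add_C_lt 1 γ γ hm; omega)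
  have hγm : γ ^ m = γ := by
    rw [show m = (q - 1) / 2 + 1 by omega, pow_succ, hγsq, one_mul]
  refine ⟨degree_eq_of_le_of_coeff_ne_zero hPdeg hPq0, hPq, hPq0, ?_⟩
  rw [hPF, coeff_X_add_C_mul_X_add_C_pow_sub_X_pow_add_C_zero _ _ _ hm, one_mul, hγm, two_mul]

/-- For `γ` with `γ^q = γ`, `γ^((q-1)/2) = 1`, `γ ≠ -1`, the polynomial
`P = ((X+1)(X+γ))^((q+1)/2) − X^(q+1) + γ ∈ k[X]` has degree exactly `q`, its
coefficient of `X^q` equals `c·(γ+1)` with `c` the image of `(q+1)/2` in `k`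
(in particular nonzero), and its constant coefficient equals `2γ`. -/
theorem stmt_19 (p e q : ℕ) (hp : p.Prime) (hp2 : p ≠ 2) (hq : q = p ^ e) (hq5 : 5 ≤ q)
    (k : Type*) [Field k] [IsAlgClosed k] [CharP k p]
    (γ : k) (hγq : γ ^ q = γ) (hγsq : γ ^ ((q - 1) / 2) = 1) (hγm1 : γ ≠ -1)
    (c : k) (hc : c = (((q + 1) / 2 : ℕ) : k))
    (P : k[X])
    (hP : P = ((X + 1) * (X + C γ * 1)) ^ ((q + 1) / 2) - X ^ (q + 1) + C γ * 1) :
    P.degree = q ∧ P.coeff q = c * (γ + 1) ∧ P.coeff q ≠ 0 ∧ P.coeff 0 = 2 * γ :=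
  stmt_19_general p e q hp hp2 hq hq5 k γ hγsq hγm1 c hc P hP
end
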